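/- For every n ≥ 1 and every natural number l, there exists a D3-directing complete NFA with n states (and some finite alphabet) whose shortest D3-directing word has length l if and only if there exists a synchronizing DFA with n states (and some finite alphabet) whose shortest synchronizing word has length l. In particular, the maximum of d₃ over D3-directing complete NFAs with n states equals the maximum synchronization length d(n) over synchronizing DFAs with n states. -/

import Mathlib

/-!
A DFA is a complete NFA with singleton transition sets, and for it D3-directing words are
exactly synchronizing words. Conversely, let `w = a₁ ⋯ a_l` be a shortest D3-directing word of
a complete NFA, taking every state to `r`. For each position `i` choose a map `fᵢ` with
`fᵢ p ∈ δ p aᵢ`, picking a successor from which `r` is still reachable by the rest of `w`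
whenever there is one. The DFA with letters `1, …, l` acting by the `fᵢ` is synchronized by
`1 2 ⋯ l`, and reading any of its synchronizing words back through `i ↦ aᵢ` gives a
D3-directing word of the NFA of the same length, so none is shorter than `l`.
-/

/-- Action of an NFA transition function on a subset of states along a word. -/
def nfaRun {n m : ℕ} (δ : Fin n → Fin m → Finset (Fin n)) :
    Finset (Fin n) → List (Fin m) → Finset (Fin n)
  | S, [] => S
  | S, a :: w => nfaRun δ (S.biUnion fun q => δ q a) w

/-- The word `w` is D3-directing for the NFA `δ`:
the intersection `⋂_{q ∈ Q} q·w` is nonempty. -/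
def nfaD3word {n m : ℕ} (δ : Fin n → Fin m → Finset (Fin n)) (w : List (Fin m)) : Prop :=
  ∃ r : Fin n, ∀ q : Fin n, r ∈ nfaRun δ {q} w

/-- Action of a DFA transition function on a subset of states along a word. -/
def dfaRun {n m : ℕ} (δ : Fin n → Fin m → Fin n) :
    Finset (Fin n) → List (Fin m) → Finset (Fin n)
  | S, [] => S
  | S, a :: w => dfaRun δ (S.image fun q => δ q a) w

/-- A word `w` synchronizes the subset `S` in the DFA `δ`. -/
def dfaSync {n m : ℕ} (δ : Fin n → Fin m → Fin n) (S : Finset (Fin n))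
    (w : List (Fin m)) : Prop :=
  (dfaRun δ S w).card = 1

open Finset

lemma List.foldl_finRange_getElem {α β : Type*} (f : α → β → α) (l : List β) (x : α) :
    (List.finRange l.length).foldl (fun a i => f a l[i]) x = l.foldl f x := by
  conv_rhs => rw [← List.map_getElem_finRange l]
  rw [List.foldl_map]
  rfl

section Automata

variable {n m : ℕ}

lemma nfaRun_eq_biUnion (δ : Fin n → Fin m → Finset (Fin n)) (w : List (Fin m))
    (S : Finset (Fin n)) : nfaRun δ S w = S.biUnion fun p => nfaRun δ {p} w := by
  induction w generalizing S with
  | nil => simp [nfaRun]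
  | cons a w ih =>
    simp only [nfaRun, singleton_biUnion]
    rw [ih, biUnion_biUnion]
    simp only [← ih]

lemma mem_nfaRun_singleton_cons (δ : Fin n → Fin m → Finset (Fin n)) (a : Fin m)
    (w : List (Fin m)) (p r : Fin n) :
    r ∈ nfaRun δ {p} (a :: w) ↔ ∃ s ∈ δ p a, r ∈ nfaRun δ {s} w := by
  rw [nfaRun, singleton_biUnion, nfaRun_eq_biUnion, mem_biUnion]

lemma nfaRun_singleton_of_dfa (δ : Fin n → Fin m → Fin n) (w : List (Fin m)) (q : Fin n) :
    nfaRun (fun p a => {δ p a}) {q} w = {w.foldl δ q} := by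
  induction w generalizing q with
  | nil => rfl
  | cons a w ih => rw [nfaRun, singleton_biUnion, ih, List.foldl_cons]

lemma foldl_mem_nfaRun_map {m' : ℕ} (δ : Fin n → Fin m → Finset (Fin n))
    (δ' : Fin n → Fin m' → Fin n) (g : Fin m' → Fin m) (hg : ∀ q b, δ' q b ∈ δ q (g b))
    (u : List (Fin m')) (q : Fin n) : u.foldl δ' q ∈ nfaRun δ {q} (u.map g) := by
  induction u generalizing q with
  | nil => exact mem_singleton_self q
  | cons b u ih => exact (mem_nfaRun_singleton_cons ..).2 ⟨δ' q b, hg q b, ih _⟩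

lemma dfaRun_eq_image (δ : Fin n → Fin m → Fin n) (w : List (Fin m)) (S : Finset (Fin n)) :
    dfaRun δ S w = S.image (w.foldl δ ·) := by
  induction w generalizing S with
  | nil => simp [dfaRun]
  | cons a w ih => simp [dfaRun, ih, image_image, Function.comp_def]

lemma dfaSync_univ_iff (δ : Fin n → Fin m → Fin n) (w : List (Fin m)) :
    dfaSync δ univ w ↔ ∃ r, ∀ q, w.foldl δ q = r := by
  rw [dfaSync, dfaRun_eq_image, card_eq_one]
  refine exists_congr fun r => ⟨fun h q => ?_, fun h => ?_⟩
  · exact mem_singleton.1 (h ▸ mem_image_of_mem _ (mem_univ q))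
  · exact eq_singleton_iff_unique_mem.2 ⟨mem_image.2 ⟨r, mem_univ r, h r⟩, by simp [h]⟩

lemma nfaD3word_map_of_dfaSync {m' : ℕ} (δ : Fin n → Fin m → Finset (Fin n))
    (δ' : Fin n → Fin m' → Fin n) (g : Fin m' → Fin m) (hg : ∀ q b, δ' q b ∈ δ q (g b))
    {u : List (Fin m')} (hu : dfaSync δ' univ u) : nfaD3word δ (u.map g) := by
  obtain ⟨r, hr⟩ := (dfaSync_univ_iff δ' u).1 hu
  exact ⟨r, fun q => hr q ▸ foldl_mem_nfaRun_map δ δ' g hg u q⟩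

lemma nfaD3word_singleton_iff_dfaSync (δ : Fin n → Fin m → Fin n) (w : List (Fin m)) :
    nfaD3word (fun p a => {δ p a}) w ↔ dfaSync δ univ w := by
  simp only [nfaD3word, nfaRun_singleton_of_dfa, mem_singleton, dfaSync_univ_iff, eq_comm]

lemma exists_forall₂_foldl_eq_of_mem_nfaRun (δ : Fin n → Fin m → Finset (Fin n))
    (hδ : ∀ q a, (δ q a).Nonempty) (w : List (Fin m)) (r : Fin n) :
    ∃ fs : List (Fin n → Fin n), List.Forall₂ (fun f a => ∀ p, f p ∈ δ p a) fs w ∧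
      ∀ p, r ∈ nfaRun δ {p} w → fs.foldl (fun q f => f q) p = r := by
  induction w with
  | nil => exact ⟨[], .nil, fun p hp => (mem_singleton.1 hp).symm⟩
  | cons a w ih =>
    obtain ⟨fs, hfs, hfs_eq⟩ := ih
    have hchoice : ∀ p, ∃ s ∈ δ p a,
        (∃ t ∈ δ p a, r ∈ nfaRun δ {t} w) → r ∈ nfaRun δ {s} w := by
      intro p
      by_cases h : ∃ t ∈ δ p a, r ∈ nfaRun δ {t} w
      · obtain ⟨t, ht, hrt⟩ := h
        exact ⟨t, ht, fun _ => hrt⟩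
      · obtain ⟨s, hs⟩ := hδ p a
        exact ⟨s, hs, fun h' => absurd h' h⟩
    choose f hf hf_run using hchoice
    refine ⟨f :: fs, .cons hf hfs, fun p hp => hfs_eq _ (hf_run p ?_)⟩
    exact (mem_nfaRun_singleton_cons δ a w p r).1 hp

end Automata

def IsD3Length (n l : ℕ) : Prop :=
  ∃ (m : ℕ) (δ : Fin n → Fin m → Finset (Fin n)),
    (∀ q a, (δ q a).Nonempty) ∧
    (∃ w, nfaD3word δ w ∧ w.length = l) ∧ ∀ w, nfaD3word δ w → l ≤ w.length

def IsSyncLength (n l : ℕ) : Prop :=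
  ∃ (m : ℕ) (δ : Fin n → Fin m → Fin n),
    (∃ w, dfaSync δ univ w ∧ w.length = l) ∧ ∀ w, dfaSync δ univ w → l ≤ w.length

lemma IsSyncLength.isD3Length {n l : ℕ} (h : IsSyncLength n l) : IsD3Length n l := by
  obtain ⟨m, δ, ⟨w, hw, hwl⟩, hmin⟩ := h
  refine ⟨m, fun p a => {δ p a}, fun _ _ => singleton_nonempty _, ⟨w, ?_, hwl⟩, fun u hu => ?_⟩
  · exact (nfaD3word_singleton_iff_dfaSync δ w).2 hw
  · exact hmin u ((nfaD3word_singleton_iff_dfaSync δ u).1 hu)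

lemma IsD3Length.isSyncLength {n l : ℕ} (h : IsD3Length n l) : IsSyncLength n l := by
  obtain ⟨m, δ, hδ, ⟨w, ⟨r, hr⟩, rfl⟩, hmin⟩ := h
  obtain ⟨fs, hfs, hfs_eq⟩ := exists_forall₂_foldl_eq_of_mem_nfaRun δ hδ w r
  obtain ⟨hlen, hget⟩ := List.forall₂_iff_get.1 hfs
  refine ⟨fs.length, fun p i => fs[i] p, ⟨List.finRange fs.length, ?_, by simp [hlen]⟩,
    fun u hu => ?_⟩
  · exact (dfaSync_univ_iff _ _).2 ⟨r, fun q =>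
      (List.foldl_finRange_getElem (fun q f => f q) fs q).trans (hfs_eq q (hr q))⟩
  · have hd3 := nfaD3word_map_of_dfaSync δ _ (fun i => w[i.cast hlen])
      (fun q i => hget i i.2 (hlen ▸ i.2) q) hu
    simpa using hmin _ hd3

lemma isD3Length_iff_isSyncLength (n l : ℕ) : IsD3Length n l ↔ IsSyncLength n l :=
  ⟨IsD3Length.isSyncLength, IsSyncLength.isD3Length⟩

theorem stmt17_general (n : ℕ) :
    (∀ l : ℕ,
      (∃ (m : ℕ) (δ : Fin n → Fin m → Finset (Fin n)),
        (∀ q a, (δ q a).Nonempty) ∧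
        (∃ w, nfaD3word δ w ∧ w.length = l) ∧ ∀ w, nfaD3word δ w → l ≤ w.length) ↔
      (∃ (m : ℕ) (δ : Fin n → Fin m → Fin n),
        (∃ w, dfaSync δ Finset.univ w ∧ w.length = l) ∧
          ∀ w, dfaSync δ Finset.univ w → l ≤ w.length)) ∧
    -- in particular, the maximum of d₃ over D3-directing complete NFAs with n states
    -- equals the maximum synchronization length d(n) over synchronizing DFAs with n states
    sSup {l : ℕ | ∃ (m : ℕ) (δ : Fin n → Fin m → Finset (Fin n)),
        (∀ q a, (δ q a).Nonempty) ∧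
        (∃ w, nfaD3word δ w ∧ w.length = l) ∧ ∀ w, nfaD3word δ w → l ≤ w.length} =
      sSup {l : ℕ | ∃ (m : ℕ) (δ : Fin n → Fin m → Fin n),
        (∃ w, dfaSync δ Finset.univ w ∧ w.length = l) ∧
          ∀ w, dfaSync δ Finset.univ w → l ≤ w.length} :=
  ⟨isD3Length_iff_isSyncLength n, congrArg sSup (Set.ext (isD3Length_iff_isSyncLength n))⟩

theorem stmt17 (n : ℕ) (hn : 1 ≤ n) :
    (∀ l : ℕ,
      (∃ (m : ℕ) (δ : Fin n → Fin m → Finset (Fin n)),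
        (∀ q a, (δ q a).Nonempty) ∧
        (∃ w, nfaD3word δ w ∧ w.length = l) ∧ ∀ w, nfaD3word δ w → l ≤ w.length) ↔
      (∃ (m : ℕ) (δ : Fin n → Fin m → Fin n),
        (∃ w, dfaSync δ Finset.univ w ∧ w.length = l) ∧
          ∀ w, dfaSync δ Finset.univ w → l ≤ w.length)) ∧
    -- in particular, the maximum of d₃ over D3-directing complete NFAs with n states
    -- equals the maximum synchronization length d(n) over synchronizing DFAs with n states
    sSup {l : ℕ | ∃ (m : ℕ) (δ : Fin n → Fin m → Finset (Fin n)),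
        (∀ q a, (δ q a).Nonempty) ∧
        (∃ w, nfaD3word δ w ∧ w.length = l) ∧ ∀ w, nfaD3word δ w → l ≤ w.length} =
      sSup {l : ℕ | ∃ (m : ℕ) (δ : Fin n → Fin m → Fin n),
        (∃ w, dfaSync δ Finset.univ w ∧ w.length = l) ∧
          ∀ w, dfaSync δ Finset.univ w → l ≤ w.length} :=
  stmt17_general n
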